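/- arXiv:cs/0610141 — 3 statements merged into one kernel-verified Lean document; each statement's English description precedes it below -/
import Mathlib

section
/- Consider the random recursion Δ̄_{k+1} = λ^{T_k} (α Δ̄_k + C) where (T_k) are iid positive-integer random variables with E[λ^{η T_k}] = m < ∞, α ≥ 0 with α^η m < 1 (for η ≤ 1 take the η-th power subadditively), C ≥ 0, and λ > 1. Then sup_k E[Δ̄_k^η] < ∞. -/
/-!
Since `0 < η ≤ 1`, the map `x ↦ x ^ η` is subadditive, so
`Δ̄_{k+1} ^ η ≤ λ^{η T_k} (α ^ η Δ̄_k ^ η + C ^ η)`. Independence of `T_k` and `Δ̄_k` turns this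
into the affine recursion `E[Δ̄_{k+1} ^ η] ≤ α ^ η m E[Δ̄_k ^ η] + m C ^ η`, whose contraction
factor `α ^ η m` is `< 1`; so the moments stay below `max (Δ₀ ^ η) (m C ^ η / (1 - α ^ η m))`.
-/

open MeasureTheory ProbabilityTheory

lemma le_max_div_one_sub_of_le_mul_add {x : ℕ → ℝ} {a b : ℝ} (ha0 : 0 ≤ a) (ha1 : a < 1)
    (hx : ∀ k, x (k + 1) ≤ a * x k + b) (k : ℕ) : x k ≤ max (x 0) (b / (1 - a)) := by
  induction k with
  | zero => exact le_max_left _ _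
  | succ k ih =>
    set M := max (x 0) (b / (1 - a))
    have hbM : b ≤ (1 - a) * M := by
      rw [← div_le_iff₀' (by linarith)]
      exact le_max_right _ _
    calc x (k + 1) ≤ a * x k + b := hx k
      _ ≤ a * M + b := by gcongr
      _ ≤ M := by linarith

lemma Real.pow_mul_rpow {lam y η : ℝ} (hlam : 0 ≤ lam) (hy : 0 ≤ y) (n : ℕ) :
    (lam ^ n * y) ^ η = lam ^ (η * n) * y ^ η := by
  rw [Real.mul_rpow (pow_nonneg hlam n) hy, ← Real.rpow_natCast, ← Real.rpow_mul hlam,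
    mul_comm (n : ℝ)]

lemma rpow_mul_add_le {α C η x : ℝ} (hα : 0 ≤ α) (hC : 0 ≤ C) (hη : 0 ≤ η) (hη1 : η ≤ 1)
    (hx : 0 ≤ x) : (α * x + C) ^ η ≤ α ^ η * x ^ η + C ^ η := by
  rw [← Real.mul_rpow hα hx]
  exact Real.rpow_add_le_add_rpow (mul_nonneg hα hx) hC hη hη1

section Recursion

variable {Ω : Type*} [MeasurableSpace Ω] {μ : Measure Ω} {α C η : ℝ} {D : Ω → ℝ}

lemma integrable_rpow_mul_add [IsFiniteMeasure μ] (hα : 0 ≤ α) (hC : 0 ≤ C) (hη : 0 ≤ η)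
    (hη1 : η ≤ 1) (hD : Measurable D) (hD0 : ∀ ω, 0 ≤ D ω) (hint : Integrable (fun ω ↦ D ω ^ η) μ) :
    Integrable (fun ω ↦ (α * D ω + C) ^ η) μ := by
  refine ((hint.const_mul (α ^ η)).add (integrable_const (C ^ η))).mono'
    (by fun_prop) (Filter.Eventually.of_forall fun ω ↦ ?_)
  rw [Real.norm_of_nonneg (Real.rpow_nonneg (add_nonneg (mul_nonneg hα (hD0 ω)) hC) η)]
  exact rpow_mul_add_le hα hC hη hη1 (hD0 ω)

lemma integral_rpow_mul_add_le [IsProbabilityMeasure μ] (hα : 0 ≤ α) (hC : 0 ≤ C) (hη : 0 ≤ η)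
    (hη1 : η ≤ 1) (hD : Measurable D) (hD0 : ∀ ω, 0 ≤ D ω) (hint : Integrable (fun ω ↦ D ω ^ η) μ) :
    ∫ ω, (α * D ω + C) ^ η ∂μ ≤ α ^ η * ∫ ω, D ω ^ η ∂μ + C ^ η := by
  have hbound : ∫ ω, (α * D ω + C) ^ η ∂μ ≤ ∫ ω, (α ^ η * D ω ^ η + C ^ η) ∂μ :=
    integral_mono (integrable_rpow_mul_add hα hC hη hη1 hD hD0 hint)
      ((hint.const_mul (α ^ η)).add (integrable_const (C ^ η)))
      fun ω ↦ rpow_mul_add_le hα hC hη hη1 (hD0 ω)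
  rwa [integral_add (hint.const_mul _) (integrable_const _), integral_const_mul,
    integral_const, probReal_univ, one_smul] at hbound

lemma integrable_and_integral_rpow_step_le [IsProbabilityMeasure μ] {lam : ℝ} (hlam : 0 < lam)
    (hα : 0 ≤ α) (hC : 0 ≤ C) (hη : 0 ≤ η) (hη1 : η ≤ 1) {T : Ω → ℕ} (hindep : IndepFun T D μ)
    (hD : Measurable D) (hD0 : ∀ ω, 0 ≤ D ω) (hint : Integrable (fun ω ↦ D ω ^ η) μ)
    (hT : Integrable (fun ω ↦ lam ^ (η * (T ω : ℝ))) μ) :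
    Integrable (fun ω ↦ (lam ^ T ω * (α * D ω + C)) ^ η) μ ∧
      ∫ ω, (lam ^ T ω * (α * D ω + C)) ^ η ∂μ ≤
        (∫ ω, lam ^ (η * (T ω : ℝ)) ∂μ) * (α ^ η * ∫ ω, D ω ^ η ∂μ + C ^ η) := by
  have hsplit : (fun ω ↦ (lam ^ T ω * (α * D ω + C)) ^ η) =
      fun ω ↦ lam ^ (η * (T ω : ℝ)) * (α * D ω + C) ^ η :=
    funext fun ω ↦ Real.pow_mul_rpow hlam.le (add_nonneg (mul_nonneg hα (hD0 ω)) hC) _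
  have hindep' : IndepFun (fun ω ↦ lam ^ (η * (T ω : ℝ))) (fun ω ↦ (α * D ω + C) ^ η) μ :=
    hindep.comp (φ := fun n : ℕ ↦ lam ^ (η * (n : ℝ))) (ψ := fun x ↦ (α * x + C) ^ η)
      measurable_from_top (by fun_prop)
  have hY := integrable_rpow_mul_add hα hC hη hη1 hD hD0 hint
  refine ⟨hsplit ▸ hindep'.integrable_mul hT hY, ?_⟩
  rw [hsplit, hindep'.integral_fun_mul_eq_mul_integral hT.aestronglyMeasurable
    hY.aestronglyMeasurable]
  exact mul_le_mul_of_nonneg_left (integral_rpow_mul_add_le hα hC hη hη1 hD hD0 hint)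
    (integral_nonneg fun ω ↦ (Real.rpow_pos_of_pos hlam _).le)

end Recursion

theorem stmt6_general {Ω : Type*} [MeasurableSpace Ω] (μ : Measure Ω)
    [IsProbabilityMeasure μ]
    (lam α C Δ₀ η m : ℝ) (hlam : 1 < lam) (hα : 0 ≤ α) (hC : 0 ≤ C)
    (hΔ₀ : 0 ≤ Δ₀) (hη : 0 < η) (hη1 : η ≤ 1)
    (T : ℕ → Ω → ℕ) (D : ℕ → Ω → ℝ)
    (hDmeas : ∀ k, Measurable (D k))
    (hindep : ∀ k, IndepFun (T k) (D k) μ)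
    (hm : ∀ k, Integrable (fun ω => lam ^ (η * (T k ω : ℝ))) μ ∧
      ∫ ω, lam ^ (η * (T k ω : ℝ)) ∂μ = m)
    (hcontr : α ^ η * m < 1)
    (h0 : ∀ ω, D 0 ω = Δ₀)
    (hrec : ∀ k ω, D (k + 1) ω = lam ^ (T k ω) * (α * D k ω + C)) :
    ∃ K : ℝ, ∀ k, ∫ ω, (D k ω) ^ η ∂μ ≤ K := by
  have hlam0 : 0 < lam := one_pos.trans hlam
  have hD0 : ∀ k ω, 0 ≤ D k ω := by
    intro k
    induction k with
    | zero => simp [h0, hΔ₀]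
    | succ k ih =>
      intro ω
      rw [hrec]
      exact mul_nonneg (by positivity) (add_nonneg (mul_nonneg hα (ih ω)) hC)
  have hstep k := integrable_and_integral_rpow_step_le hlam0 hα hC hη.le hη1 (hindep k)
    (hDmeas k) (hD0 k)
  have hDrec k : D (k + 1) = fun ω ↦ lam ^ T k ω * (α * D k ω + C) := funext (hrec k)
  have hint : ∀ k, Integrable (fun ω ↦ D k ω ^ η) μ := by
    intro k
    induction k with
    | zero => simp [h0]
    | succ k ih => rw [hDrec]; exact (hstep k ih (hm k).1).1
  have hm0 : 0 ≤ m := (hm 0).2 ▸ integral_nonneg fun ω ↦ (Real.rpow_pos_of_pos hlam0 _).le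
  refine ⟨_, le_max_div_one_sub_of_le_mul_add (mul_nonneg (by positivity) hm0) hcontr
    (b := m * C ^ η) fun k ↦ ?_⟩
  have hmoment := (hstep k (hint k) (hm k).1).2
  rw [(hm k).2] at hmoment
  rw [hDrec]
  linarith

/-- Random recursion Δ̄_{k+1} = λ^{T_k}(α Δ̄_k + C) with iid
positive-integer T_k, E[λ^{η T_k}] = m < ∞, α^η m < 1, C ≥ 0, λ > 1,
η ∈ (0,1], Δ̄_0 a nonnegative constant, T_k independent of Δ̄_k.
Then sup_k E[Δ̄_k^η] < ∞. -/
theorem stmt6 {Ω : Type*} [MeasurableSpace Ω] (μ : Measure Ω)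
    [IsProbabilityMeasure μ]
    (lam α C Δ₀ η m : ℝ) (hlam : 1 < lam) (hα : 0 ≤ α) (hC : 0 ≤ C)
    (hΔ₀ : 0 ≤ Δ₀) (hη : 0 < η) (hη1 : η ≤ 1)
    (T : ℕ → Ω → ℕ) (D : ℕ → Ω → ℝ)
    (hT1 : ∀ k ω, 1 ≤ T k ω)
    (hTmeas : ∀ k, Measurable (T k)) (hDmeas : ∀ k, Measurable (D k))
    (hiid : ∀ j k, IdentDistrib (T j) (T k) μ μ)
    (hindep : ∀ k, IndepFun (T k) (D k) μ)
    (hm : ∀ k, Integrable (fun ω => lam ^ (η * (T k ω : ℝ))) μ ∧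
      ∫ ω, lam ^ (η * (T k ω : ℝ)) ∂μ = m)
    (hcontr : α ^ η * m < 1)
    (h0 : ∀ ω, D 0 ω = Δ₀)
    (hrec : ∀ k ω, D (k + 1) ω = lam ^ (T k ω) * (α * D k ω + C)) :
    ∃ K : ℝ, ∀ k, ∫ ω, (D k ω) ^ η ∂μ ≤ K :=
  stmt6_general μ lam α C Δ₀ η m hlam hα hC hΔ₀ hη hη1 T D hDmeas hindep hm hcontr h0 hrec
end

section
/- With the dancing control U'_t = U_t + F(b_t) − λF(b_{t-1}) where F(b) = 3Γ_u b and Γ_u = Ω + (λ+1)Γ, if the observer computes D_t = X_o(t+1) − λX_o(t) − U_t, then |D_t − 3Γ_u b_t| ≤ Γ_u; hence since distinct integer values b ≠ b' give |3Γ_u b − 3Γ_u b'| ≥ 3Γ_u > 2Γ_u, the integer b_t is uniquely determined by D_t. -/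
/-! The observer's residual `D_t − 3Γ_u b_t` is `e₁ − λ e₀ + W_t`, where `e₀, e₁` are the two
observation errors, so it has size at most `(λ + 1)Γ + Ω/2 ≤ Γ_u`. The codewords `3Γ_u b` are
`3Γ_u` apart, more than twice that radius, so at most one of them lies within `Γ_u` of `D_t`. -/

section

variable {R : Type*} [CommRing R] [LinearOrder R] [IsStrictOrderedRing R]

lemma le_abs_mul_intCast_sub_mul_intCast {c : R} (hc : 0 ≤ c) {m n : ℤ} (hmn : m ≠ n) :
    c ≤ |c * m - c * n| := by
  have hone : (1 : R) ≤ |(m : R) - n| := by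
    exact_mod_cast Int.one_le_abs (sub_ne_zero.2 hmn)
  rw [← mul_sub, abs_mul, abs_of_nonneg hc]
  exact le_mul_of_one_le_right hc hone

lemma eq_of_abs_sub_mul_intCast_le {c r x : R} (hrc : 2 * r < c) {m n : ℤ}
    (hm : |x - c * m| ≤ r) (hn : |x - c * n| ≤ r) : m = n := by
  by_contra hmn
  have hc : 0 ≤ c := by linarith [(abs_nonneg (x - c * m)).trans hm]
  have hsep := le_abs_mul_intCast_sub_mul_intCast hc hmn
  have htri := abs_sub_le (c * m) x (c * n)
  linarith [abs_sub_comm (c * m) x]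

lemma abs_sub_mul_add_le {lam Γ δ e₀ e₁ w : R} (hlam : 0 ≤ lam)
    (he₀ : |e₀| ≤ Γ) (he₁ : |e₁| ≤ Γ) (hw : |w| ≤ δ) :
    |e₁ - lam * e₀ + w| ≤ (lam + 1) * Γ + δ :=
  calc |e₁ - lam * e₀ + w| ≤ |e₁| + |lam * e₀| + |w| :=
        (abs_add_le _ _).trans (by gcongr; exact abs_sub _ _)
    _ = |e₁| + lam * |e₀| + |w| := by rw [abs_mul, abs_of_nonneg hlam]
    _ ≤ (lam + 1) * Γ + δ := by linarith [mul_le_mul_of_nonneg_left he₀ hlam]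

end

theorem stmt10_general (lam Ω Γ U W X0 X1 Xo0 Xo1 : ℝ) (b bprev : ℤ)
    (hlam : 1 < lam) (hΩ : 0 ≤ Ω)
    (Γu : ℝ) (hΓu : Γu = Ω + (lam + 1) * Γ) (hΓupos : 0 < Γu)
    (hW : |W| ≤ Ω / 2)
    (hplant : X1 = lam * X0 + (U + 3 * Γu * b - lam * (3 * Γu * bprev)) + W)
    (hobs0 : |Xo0 - X0| ≤ Γ) (hobs1 : |Xo1 - X1| ≤ Γ)
    (Dt : ℝ) (hDt : Dt = Xo1 - lam * Xo0 - U + lam * (3 * Γu * bprev)) :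
    |Dt - 3 * Γu * b| ≤ Γu ∧
    (∀ b' : ℤ, b' ≠ b → |3 * Γu * (b : ℝ) - 3 * Γu * (b' : ℝ)| ≥ 3 * Γu) ∧
    3 * Γu > 2 * Γu ∧
    ∀ b' : ℤ, |Dt - 3 * Γu * b'| ≤ Γu → b' = b := by
  have hsep : 2 * Γu < 3 * Γu := by linarith
  have hresidual : Dt - 3 * Γu * b = (Xo1 - X1) - lam * (Xo0 - X0) + W := by
    rw [hDt, hplant]; ring
  have hdecode : |Dt - 3 * Γu * b| ≤ Γu :=
    calc |Dt - 3 * Γu * b| ≤ (lam + 1) * Γ + Ω / 2 := by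
          rw [hresidual]; exact abs_sub_mul_add_le (by linarith) hobs0 hobs1 hW
      _ ≤ Γu := by rw [hΓu]; linarith [half_le_self hΩ]
  exact ⟨hdecode, fun b' hb' => le_abs_mul_intCast_sub_mul_intCast (by linarith) hb'.symm, hsep,
    fun b' hb' => eq_of_abs_sub_mul_intCast_le hsep hb' hdecode⟩

/-- With dancing control U'_t = U_t + F(b_t) − λF(b_{t-1}),
F(b) = 3Γ_u b, Γ_u = Ω + (λ+1)Γ > 0, plant X_{t+1} = λX_t + U'_t + W_t,
|W_t| ≤ Ω/2, observations with noise bounded by Γ.  The observer computes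
D_t = X_o(t+1) − λX_o(t) − U_t (compensating the known term λF(b_{t-1})).
Then |D_t − 3Γ_u b_t| ≤ Γ_u, and since distinct integers b ≠ b' give
|3Γ_u b − 3Γ_u b'| ≥ 3Γ_u > 2Γ_u, the integer b_t is uniquely determined. -/
theorem stmt10 (lam Ω Γ U W X0 X1 Xo0 Xo1 : ℝ) (b bprev : ℤ)
    (hlam : 1 < lam) (hΩ : 0 ≤ Ω) (hΓ : 0 ≤ Γ)
    (Γu : ℝ) (hΓu : Γu = Ω + (lam + 1) * Γ) (hΓupos : 0 < Γu)
    (hW : |W| ≤ Ω / 2)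
    (hplant : X1 = lam * X0 + (U + 3 * Γu * b - lam * (3 * Γu * bprev)) + W)
    (hobs0 : |Xo0 - X0| ≤ Γ) (hobs1 : |Xo1 - X1| ≤ Γ)
    (Dt : ℝ) (hDt : Dt = Xo1 - lam * Xo0 - U + lam * (3 * Γu * bprev)) :
    |Dt - 3 * Γu * b| ≤ Γu ∧
    (∀ b' : ℤ, b' ≠ b → |3 * Γu * (b : ℝ) - 3 * Γu * (b' : ℝ)| ≥ 3 * Γu) ∧
    3 * Γu > 2 * Γu ∧
    ∀ b' : ℤ, |Dt - 3 * Γu * b'| ≤ Γu → b' = b :=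
  stmt10_general lam Ω Γ U W X0 X1 Xo0 Xo1 b bprev hlam hΩ Γu hΓu hΓupos hW hplant hobs0 hobs1 Dt
    hDt
end

section
/- Suppose between consecutive successful decodings the uncertainty evolves as Δ̄_{k+1} = λ^{T_k − n}(e^{-n(R − ln λ)} Δ̄_k + C_n) with (T_k − n) iid, P(T_k − n = j) = (1 − p)p^{j-1}, p = e^{-E₀(ρ)}, R = E₀(ρ)/ρ, and C_n = Γλ^n + Ωλ^{1+n}/(λ−1). If η ≤ ρ satisfies λ^η p < 1 (equivalently E₀(ρ) > η ln λ) and n is large enough that e^{-η n(R − ln λ)} E[λ^{η(T_1−n)}] < 1 (with η ≤ 1), then sup_k E[Δ̄_k^η] < ∞. -/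
open MeasureTheory ProbabilityTheory

/-! Raising the recursion to the power `η ≤ 1` and using subadditivity of `x ↦ x ^ η` gives
`Δ̄_{k+1}^η ≤ λ^{η(T_k - n)} (e^{-ηn(R - ln λ)} Δ̄_k^η + C_n^η)`. Since `T_k` is independent of
`Δ̄_k`, taking expectations yields `m_{k+1} ≤ q m_k + r` for `m_k = E[Δ̄_k^η]`, with contraction
factor `q = e^{-ηn(R - ln λ)} E[λ^{η(T_1 - n)}] < 1`, so `m_k ≤ max (m_0, r / (1 - q))`.
When `Δ̄_0^η` is not integrable, neither is any `Δ̄_k^η` (each one dominates a positive multiple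
of the previous one), and all the integrals are `0` by convention. -/

lemma le_max_div_one_sub_of_le_mul_add_s15 {x : ℕ → ℝ} {q r : ℝ} (hq0 : 0 ≤ q) (hq1 : q < 1)
    (h : ∀ k, x (k + 1) ≤ q * x k + r) (k : ℕ) : x k ≤ max (x 0) (r / (1 - q)) := by
  induction k with
  | zero => exact le_max_left _ _
  | succ k ih =>
    have hr : r ≤ (1 - q) * max (x 0) (r / (1 - q)) :=
      (div_le_iff₀' (by linarith)).1 (le_max_right _ _)
    linarith [h k, mul_le_mul_of_nonneg_left ih hq0]

namespace Real

variable {t a x C η : ℝ}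

lemma rpow_mul_add_le (ht : 0 ≤ t) (ha : 0 ≤ a) (hx : 0 ≤ x) (hC : 0 ≤ C) (hη0 : 0 ≤ η)
    (hη1 : η ≤ 1) : (t * (a * x + C)) ^ η ≤ t ^ η * (a ^ η * x ^ η + C ^ η) := by
  rw [mul_rpow ht (by positivity), ← mul_rpow ha hx]
  exact mul_le_mul_of_nonneg_left (rpow_add_le_add_rpow (by positivity) hC hη0 hη1)
    (by positivity)

lemma rpow_mul_le_rpow_mul_add (ht : 1 ≤ t) (ha : 0 ≤ a) (hx : 0 ≤ x) (hC : 0 ≤ C)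
    (hη : 0 ≤ η) : a ^ η * x ^ η ≤ (t * (a * x + C)) ^ η := by
  rw [← mul_rpow ha hx]
  refine rpow_le_rpow (by positivity) ?_ hη
  nlinarith [mul_nonneg ha hx]

end Real

namespace ProbabilityTheory

variable {Ω : Type*} [MeasurableSpace Ω] {μ : Measure Ω}

lemma IndepFun.integral_le_mul_of_le_mul {Y G X : Ω → ℝ} (hind : IndepFun G X μ)
    (hG : Integrable G μ) (hX : Integrable X μ) (hY0 : 0 ≤ᵐ[μ] Y) (hle : Y ≤ᵐ[μ] G * X) :
    ∫ ω, Y ω ∂μ ≤ (∫ ω, G ω ∂μ) * ∫ ω, X ω ∂μ :=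
  (integral_mono_of_nonneg hY0 (hind.integrable_mul hG hX) hle).trans_eq
    (hind.integral_mul_eq_mul_integral hG.1 hX.1)

variable [IsProbabilityMeasure μ]

theorem exists_forall_integral_le_of_le_mul_indep {Y G : ℕ → Ω → ℝ} {c b M : ℝ} (hc : 0 < c)
    (hb : 0 ≤ b) (hM : 0 ≤ M) (hcM : c * M < 1) (hYm : ∀ k, AEStronglyMeasurable (Y k) μ)
    (hY0 : ∀ k ω, 0 ≤ Y k ω) (hG : ∀ k, Integrable (G k) μ) (hGM : ∀ k, ∫ ω, G k ω ∂μ = M)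
    (hind : ∀ k, IndepFun (G k) (Y k) μ)
    (hup : ∀ k ω, Y (k + 1) ω ≤ G k ω * (c * Y k ω + b))
    (hlow : ∀ k ω, c * Y k ω ≤ Y (k + 1) ω) :
    ∃ K, ∀ k, ∫ ω, Y k ω ∂μ ≤ K := by
  suffices h : ∀ k, ∫ ω, Y (k + 1) ω ∂μ ≤ c * M * ∫ ω, Y k ω ∂μ + M * b from
    ⟨_, le_max_div_one_sub_of_le_mul_add_s15 (by positivity) hcM h⟩
  intro k
  by_cases hk : Integrable (Y k) μ
  · have hX : Integrable (fun ω ↦ c * Y k ω + b) μ := (hk.const_mul c).add (integrable_const b)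
    have hindX : IndepFun (G k) (fun ω ↦ c * Y k ω + b) μ :=
      (hind k).comp measurable_id ((measurable_id.const_mul c).add_const b)
    calc ∫ ω, Y (k + 1) ω ∂μ ≤ M * ∫ ω, c * Y k ω + b ∂μ := by
          rw [← hGM k]
          exact hindX.integral_le_mul_of_le_mul (hG k) hX (.of_forall (hY0 (k + 1)))
            (.of_forall (hup k))
      _ = c * M * ∫ ω, Y k ω ∂μ + M * b := by
          rw [integral_add (hk.const_mul c) (integrable_const b), integral_const_mul,
            integral_const, probReal_univ, one_smul]
          ring
  · have hk1 : ¬ Integrable (Y (k + 1)) μ := fun h ↦ hk <|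
      (h.const_mul c⁻¹).mono' (hYm k) <| .of_forall fun ω ↦ by
        rw [Real.norm_eq_abs, abs_of_nonneg (hY0 k ω), le_inv_mul_iff₀ hc]
        exact hlow k ω
    rw [integral_undef hk, integral_undef hk1]
    positivity

end ProbabilityTheory

theorem stmt15_general {Ω' : Type*} [MeasurableSpace Ω'] (μ : Measure Ω')
    [IsProbabilityMeasure μ]
    (lam Ωd Γ η R Cn : ℝ) (n : ℕ)
    (hlam : 1 < lam) (hΩd : 0 ≤ Ωd) (hΓ : 0 ≤ Γ)
    (hη : 0 < η) (hη1 : η ≤ 1)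
    (hCn : Cn = Γ * lam ^ n + Ωd * lam ^ (1 + n) / (lam - 1))
    (T : ℕ → Ω' → ℕ) (D : ℕ → Ω' → ℝ)
    (hDmeas : ∀ k, Measurable (D k))
    (hiid : ∀ j k, IdentDistrib (T j) (T k) μ μ)
    (hindep : ∀ k, IndepFun (T k) (D k) μ)
    (hmom : Integrable (fun ω => lam ^ (η * ((T 0 ω - n : ℕ) : ℝ))) μ)
    (hn : Real.exp (-(η * n * (R - Real.log lam))) *
      ∫ ω, lam ^ (η * ((T 0 ω - n : ℕ) : ℝ)) ∂μ < 1)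
    (hD0 : ∀ ω, 0 ≤ D 0 ω)
    (hrec : ∀ k ω, D (k + 1) ω =
      lam ^ (T k ω - n) *
        (Real.exp (-(n * (R - Real.log lam))) * D k ω + Cn)) :
    ∃ K : ℝ, ∀ k, ∫ ω, (D k ω) ^ η ∂μ ≤ K := by
  have hlam0 : 0 < lam := one_pos.trans hlam
  have hCn0 : 0 ≤ Cn := hCn ▸ by have := sub_pos.2 hlam; positivity
  set a := Real.exp (-(n * (R - Real.log lam)))
  have hD : ∀ k ω, 0 ≤ D k ω := by
    intro k
    induction k with
    | zero => exact hD0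
    | succ k ih => intro ω; rw [hrec]; have := ih ω; positivity
  set G : ℕ → Ω' → ℝ := fun k ω ↦ lam ^ (η * ((T k ω - n : ℕ) : ℝ))
  have hGpow : ∀ k ω, (lam ^ (T k ω - n)) ^ η = G k ω := fun k ω ↦ by
    rw [← Real.rpow_natCast, ← Real.rpow_mul hlam0.le, mul_comm]
  have hGid : ∀ k, IdentDistrib (G k) (G 0) μ μ := fun k ↦ (hiid k 0).comp
    (u := fun m : ℕ ↦ lam ^ (η * ((m - n : ℕ) : ℝ))) measurable_from_nat
  refine exists_forall_integral_le_of_le_mul_indep (Y := fun k ω ↦ D k ω ^ η) (G := G)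
    (c := a ^ η) (b := Cn ^ η) (by positivity) (by positivity)
    (integral_nonneg fun ω ↦ by positivity) ?_
    (fun k ↦ ((hDmeas k).pow_const η).aestronglyMeasurable)
    (fun k ω ↦ Real.rpow_nonneg (hD k ω) η)
    (fun k ↦ (hGid k).integrable_iff.2 hmom) (fun k ↦ (hGid k).integral_eq)
    (fun k ↦ (hindep k).comp (φ := fun m : ℕ ↦ lam ^ (η * ((m - n : ℕ) : ℝ)))
      measurable_from_nat (measurable_id.pow_const η)) (fun k ω ↦ ?_)
    (fun k ω ↦ ?_)
  · have ha : a ^ η = Real.exp (-(η * n * (R - Real.log lam))) := by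
      rw [← Real.exp_mul]; ring_nf
    rwa [ha]
  · rw [hrec, ← hGpow]
    exact Real.rpow_mul_add_le (by positivity) (by positivity) (hD k ω) hCn0 hη.le hη1
  · rw [hrec]
    exact Real.rpow_mul_le_rpow_mul_add (one_le_pow₀ hlam.le) (by positivity) (hD k ω) hCn0 hη.le

/-- Between consecutive successful decodings the uncertainty
bound evolves as Δ̄_{k+1} = λ^{T_k − n}(e^{-n(R − ln λ)} Δ̄_k + C_n), with
(T_k − n) iid geometric on positive integers, failure probability
p = e^{-E₀(ρ)}, R = E₀(ρ)/ρ, and C_n = Γλ^n + Ωλ^{1+n}/(λ−1).  If η ≤ ρ,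
η ∈ (0,1], λ^η p < 1 (equivalently E₀(ρ) > η ln λ), and n is large enough
that e^{-ηn(R − ln λ)} E[λ^{η(T_1 − n)}] < 1, then sup_k E[Δ̄_k^η] < ∞. -/
theorem stmt15 {Ω' : Type*} [MeasurableSpace Ω'] (μ : Measure Ω')
    [IsProbabilityMeasure μ]
    (lam Ωd Γ ρ η E₀ρ R p Cn : ℝ) (n : ℕ)
    (hlam : 1 < lam) (hΩd : 0 ≤ Ωd) (hΓ : 0 ≤ Γ)
    (hρ : 0 < ρ) (hη : 0 < η) (hη1 : η ≤ 1) (hηρ : η ≤ ρ)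
    (hE₀ : 0 < E₀ρ) (hp : p = Real.exp (-E₀ρ)) (hR : R = E₀ρ / ρ)
    (hRlam : Real.log lam < R)
    (hCn : Cn = Γ * lam ^ n + Ωd * lam ^ (1 + n) / (lam - 1))
    (T : ℕ → Ω' → ℕ) (D : ℕ → Ω' → ℝ)
    (hTn : ∀ k ω, n + 1 ≤ T k ω)
    (hTmeas : ∀ k, Measurable (T k)) (hDmeas : ∀ k, Measurable (D k))
    (hiid : ∀ j k, IdentDistrib (T j) (T k) μ μ)
    (hdist : ∀ k, ∀ j : ℕ, 1 ≤ j →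
      μ {ω | T k ω - n = j} = ENNReal.ofReal ((1 - p) * p ^ (j - 1)))
    (hindep : ∀ k, IndepFun (T k) (D k) μ)
    (hcontr : lam ^ η * p < 1)
    (hmom : Integrable (fun ω => lam ^ (η * ((T 0 ω - n : ℕ) : ℝ))) μ)
    (hn : Real.exp (-(η * n * (R - Real.log lam))) *
      ∫ ω, lam ^ (η * ((T 0 ω - n : ℕ) : ℝ)) ∂μ < 1)
    (hD0 : ∀ ω, 0 ≤ D 0 ω)
    (hrec : ∀ k ω, D (k + 1) ω =
      lam ^ (T k ω - n) *
        (Real.exp (-(n * (R - Real.log lam))) * D k ω + Cn)) :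
    ∃ K : ℝ, ∀ k, ∫ ω, (D k ω) ^ η ∂μ ≤ K :=
  stmt15_general μ lam Ωd Γ η R Cn n hlam hΩd hΓ hη hη1 hCn T D hDmeas hiid hindep hmom hn hD0 hrec
end
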